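/- arXiv:1611.07630 — 5 statements merged into one kernel-verified Lean document; each statement's English description precedes it below -/
import Mathlib

section
/- Let p_d, p_c, p_cd be real numbers with 0 ≤ p_cd ≤ p_c ≤ p_d ≤ 1 and p_c + p_d − p_cd ≤ 1. Define Q : {0,1}^4 → ℝ (coordinates ordered (S11, S12, S21, S22)) by Q(1,1,1,1) = p_cd, Q(1,0,0,1) = p_d − p_c, Q(1,0,1,0) = p_c − p_cd, Q(0,1,0,1) = p_c − p_cd, Q(0,0,0,0) = 1 − p_c − p_d + p_cd, and Q = 0 on all other points. Then Q is a probability mass function (all values are nonnegative and sum to 1), and its marginals satisfy: Q(S11=1, S12=1) = p_cd, Q(S11=1, S12=0) = p_d − p_cd, Q(S11=0, S12=1) = p_c − p_cd, and symmetrically Q(S22=1, S21=1) = p_cd, Q(S22=1, S21=0) = p_d − p_cd, Q(S22=0, S21=1) = p_c − p_cd. In particular, Q is supported on at most five states (the contracted channel) and has the same marginal distributions of (S11,S12) and (S21,S22) as the symmetric bursty MIMO X channel. -/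
/-- The contracted-channel pmf on (S11, S12, S21, S22) ∈ {0,1}^4. -/
noncomputable def contractedQ (p_d p_c p_cd : ℝ) : Bool × Bool × Bool × Bool → ℝ
  | (true, true, true, true) => p_cd
  | (true, false, false, true) => p_d - p_c
  | (true, false, true, false) => p_c - p_cd
  | (false, true, false, true) => p_c - p_cd
  | (false, false, false, false) => 1 - p_c - p_d + p_cd
  | _ => 0

/-- The contracted channel is a pmf supported on at most five states, with the
same marginals of (S11,S12) and (S21,S22) as the symmetric bursty MIMO X channel. -/
theorem contracted_channel_pmf_and_marginals (p_d p_c p_cd : ℝ)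
    (h0 : 0 ≤ p_cd) (h1 : p_cd ≤ p_c) (h2 : p_c ≤ p_d) (h3 : p_d ≤ 1)
    (h4 : p_c + p_d - p_cd ≤ 1) :
    (∀ s, 0 ≤ contractedQ p_d p_c p_cd s) ∧
    (∑ s : Bool × Bool × Bool × Bool, contractedQ p_d p_c p_cd s = 1) ∧
    (∑ t : Bool × Bool, contractedQ p_d p_c p_cd (true, true, t.1, t.2) = p_cd) ∧
    (∑ t : Bool × Bool, contractedQ p_d p_c p_cd (true, false, t.1, t.2) = p_d - p_cd) ∧
    (∑ t : Bool × Bool, contractedQ p_d p_c p_cd (false, true, t.1, t.2) = p_c - p_cd) ∧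
    (∑ t : Bool × Bool, contractedQ p_d p_c p_cd (t.1, t.2, true, true) = p_cd) ∧
    (∑ t : Bool × Bool, contractedQ p_d p_c p_cd (t.1, t.2, false, true) = p_d - p_cd) ∧
    (∑ t : Bool × Bool, contractedQ p_d p_c p_cd (t.1, t.2, true, false) = p_c - p_cd) := by
  refine ⟨?_, ?_, ?_, ?_, ?_, ?_, ?_, ?_⟩
  · rintro ⟨a,b,c,d⟩
    rcases a <;> rcases b <;> rcases c <;> rcases d <;> simp [contractedQ] <;> linarith
  all_goals simp [Fintype.sum_prod_type, contractedQ] <;> ring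
end

section
/- Let p_d, p_c, p_cd be real numbers with 0 ≤ p_cd ≤ p_c ≤ p_d ≤ 1 and p_c + p_d − p_cd ≤ 1, and let M, N be real numbers with 0 < N ≤ M. Define R1(M,N) := 2·(p_cd·min(2M,N) + p_c·min(M,2N) + (p_d − p_c − 2·p_cd)·min(M,N)) and R2(M,N) := 2·((p_d − p_c)·min(2M,N) + (p_d − p_cd)·min(M,2N) + (p_cd − 2·p_d + 2·p_c)·min(M,N)). Then the Type II upper bound exceeds the reciprocal (antenna-swapped) Type I upper bound by exactly the same amount in both regimes: R1(M,N) − R1(N,M) = 2·min(N, M−N)·(p_c − p_cd) and R2(M,N) − R2(N,M) = 2·min(N, M−N)·(p_c − p_cd); in particular both differences are nonnegative, and strictly positive whenever p_c > p_cd and M > N. This quantifies the non-reciprocity of the bursty Type I and Type II channels. -/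
/-- Regime-1 sum-DoF upper bound of Theorem 1. -/
noncomputable def R1 (p_d p_c p_cd M N : ℝ) : ℝ :=
  2 * (p_cd * min (2*M) N + p_c * min M (2*N) + (p_d - p_c - 2*p_cd) * min M N)

/-- Regime-2 sum-DoF upper bound of Theorem 1. -/
noncomputable def R2 (p_d p_c p_cd M N : ℝ) : ℝ :=
  2 * ((p_d - p_c) * min (2*M) N + (p_d - p_cd) * min M (2*N) +
    (p_cd - 2*p_d + 2*p_c) * min M N)

/-- Non-reciprocity of Type I and Type II bursty channels: the Type II upper
bound exceeds the antenna-swapped Type I upper bound by 2·min(N, M−N)·(p_c − p_cd)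
in both regimes. -/
theorem typeII_minus_typeI_gap (p_d p_c p_cd M N : ℝ)
    (h0 : 0 ≤ p_cd) (h1 : p_cd ≤ p_c) (h2 : p_c ≤ p_d) (h3 : p_d ≤ 1)
    (h4 : p_c + p_d - p_cd ≤ 1) (hN : 0 < N) (hNM : N ≤ M) :
    R1 p_d p_c p_cd M N - R1 p_d p_c p_cd N M = 2 * min N (M - N) * (p_c - p_cd) ∧
    R2 p_d p_c p_cd M N - R2 p_d p_c p_cd N M = 2 * min N (M - N) * (p_c - p_cd) ∧
    0 ≤ R1 p_d p_c p_cd M N - R1 p_d p_c p_cd N M ∧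
    0 ≤ R2 p_d p_c p_cd M N - R2 p_d p_c p_cd N M ∧
    (p_cd < p_c → N < M →
      0 < R1 p_d p_c p_cd M N - R1 p_d p_c p_cd N M ∧
      0 < R2 p_d p_c p_cd M N - R2 p_d p_c p_cd N M) := by
  have e1 : min (2*M) N = N := min_eq_right (by linarith)
  have e2 : min N (2*M) = N := min_eq_left (by linarith)
  have e3 : min M N = N := min_eq_right hNM
  have e4 : min N M = N := min_eq_left hNM
  have e5 : min M (2*N) = N + min (M - N) N := by
    rw [← min_add_add_left N (M - N) N]; ring_nf
  have e6 : min (2*N) M = N + min N (M - N) := by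
    rw [← min_add_add_left N N (M - N)]; ring_nf
  have hmin : min (M - N) N = min N (M - N) := min_comm _ _
  have hR1 : R1 p_d p_c p_cd M N - R1 p_d p_c p_cd N M
      = 2 * min N (M - N) * (p_c - p_cd) := by
    simp only [R1, e1, e2, e3, e4, e5, e6, hmin]; ring
  have hR2 : R2 p_d p_c p_cd M N - R2 p_d p_c p_cd N M
      = 2 * min N (M - N) * (p_c - p_cd) := by
    simp only [R2, e1, e2, e3, e4, e5, e6, hmin]; ring
  have hge : 0 ≤ 2 * min N (M - N) * (p_c - p_cd) := by
    have : 0 ≤ min N (M - N) := le_min (le_of_lt hN) (by linarith)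
    nlinarith
  refine ⟨hR1, hR2, by rw [hR1]; exact hge, by rw [hR2]; exact hge, ?_⟩
  intro hp hm
  have hpos : 0 < 2 * min N (M - N) * (p_c - p_cd) := by
    have : 0 < min N (M - N) := lt_min hN (by linarith)
    nlinarith
  exact ⟨by rw [hR1]; exact hpos, by rw [hR2]; exact hpos⟩
end

section
/- Let p_d, p_c, p_cd be reals with 0 ≤ p_cd ≤ p_c ≤ p_d ≤ 1, p_c + p_d − p_cd ≤ 1, and p_cd > p_d − p_c (Regime 2). Let M, N be positive integers with M ≤ N and 3M > 2N, and suppose N = 3k for an integer k (the case q = 0). Define f(a) := min( 2·(⟨M, 0, M⟩ − a·⟨M−2k, −k, k⟩), ⟨N, M, M⟩ + a·k·p_cd ) for a ∈ [0,1]. Then: (i) if (M−2k)·p_cd ≤ k·(p_d − p_c), the maximum of f over [0,1] equals 2·⟨2k, k, M−k⟩, attained at a = 1; (ii) if (M−2k)·p_cd > k·(p_d − p_c), the maximum of f over [0,1] equals ⟨N, M, M⟩ + k·p_cd·⟨2M−N, −M, M⟩/⟨2M−N, −2k, 2k⟩, attained at a = ⟨2M−N, −M, M⟩/⟨2M−N,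 −2k, 2k⟩. (This is the q = 0 case of Proposition 3, establishing the lower bound η_lb,1 of Theorem 3.) -/
/-- The η-triple ⟨a,b,c⟩ = a·p_cd + b·(p_d − p_cd) + c·(p_c − p_cd). -/
noncomputable def etaTriple (p_d p_c p_cd a b c : ℝ) : ℝ :=
  a * p_cd + b * (p_d - p_cd) + c * (p_c - p_cd)

/-- Proposition 3 (case q = 0): optimal power tuning and achievable sum DoF of
the HKIA scheme on the Type I bursty MIMO X channel in Regime 2, N = 3k. -/
theorem hkia_typeI_q0_optimum (p_d p_c p_cd : ℝ) (M N k : ℕ)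
    (h0 : 0 ≤ p_cd) (h1 : p_cd ≤ p_c) (h2 : p_c ≤ p_d) (h3 : p_d ≤ 1)
    (h4 : p_c + p_d - p_cd ≤ 1) (hreg2 : p_d - p_c < p_cd)
    (hM : 0 < M) (hN : 0 < N) (hMN : M ≤ N) (h23 : 2*N < 3*M)
    (hk : N = 3*k) :
    letI f : ℝ → ℝ := fun a =>
      min (2 * (etaTriple p_d p_c p_cd (M:ℝ) 0 (M:ℝ) -
            a * etaTriple p_d p_c p_cd ((M:ℝ) - 2*k) (-(k:ℝ)) (k:ℝ)))
          (etaTriple p_d p_c p_cd (N:ℝ) (M:ℝ) (M:ℝ) + a * (k:ℝ) * p_cd)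
    (((M:ℝ) - 2*k) * p_cd ≤ (k:ℝ) * (p_d - p_c) →
      f 1 = 2 * etaTriple p_d p_c p_cd (2*(k:ℝ)) (k:ℝ) ((M:ℝ) - k) ∧
      ∀ a ∈ Set.Icc (0:ℝ) 1, f a ≤ f 1) ∧
    ((k:ℝ) * (p_d - p_c) < ((M:ℝ) - 2*k) * p_cd →
      letI a₀ : ℝ := etaTriple p_d p_c p_cd (2*(M:ℝ) - N) (-(M:ℝ)) (M:ℝ) /
        etaTriple p_d p_c p_cd (2*(M:ℝ) - N) (-(2*(k:ℝ))) (2*(k:ℝ))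
      a₀ ∈ Set.Icc (0:ℝ) 1 ∧
      f a₀ = etaTriple p_d p_c p_cd (N:ℝ) (M:ℝ) (M:ℝ) +
        (k:ℝ) * p_cd * etaTriple p_d p_c p_cd (2*(M:ℝ) - N) (-(M:ℝ)) (M:ℝ) /
          etaTriple p_d p_c p_cd (2*(M:ℝ) - N) (-(2*(k:ℝ))) (2*(k:ℝ)) ∧
      ∀ a ∈ Set.Icc (0:ℝ) 1, f a ≤ f a₀) := by
  have hk1 : 1 ≤ k := by omega
  have h2k : 2*k < M := by omega
  have hM3k : M ≤ 3*k := by omega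
  have hkR : (1:ℝ) ≤ (k:ℝ) := by exact_mod_cast hk1
  have h2kR : 2*(k:ℝ) < (M:ℝ) := by exact_mod_cast h2k
  have hM3kR : (M:ℝ) ≤ 3*(k:ℝ) := by exact_mod_cast hM3k
  have hNR : (N:ℝ) = 3*(k:ℝ) := by exact_mod_cast hk
  have hpcd : 0 < p_cd := by linarith
  beta_reduce
  constructor
  · -- Case (i): slope of g is nonnegative, f nondecreasing, max at a = 1
    intro hc
    have hf1 : min (2 * (etaTriple p_d p_c p_cd (M:ℝ) 0 (M:ℝ) -
            1 * etaTriple p_d p_c p_cd ((M:ℝ) - 2*k) (-(k:ℝ)) (k:ℝ)))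
          (etaTriple p_d p_c p_cd (N:ℝ) (M:ℝ) (M:ℝ) + 1 * (k:ℝ) * p_cd) =
        2 * etaTriple p_d p_c p_cd (2*(k:ℝ)) (k:ℝ) ((M:ℝ) - k) := by
      rw [min_eq_left]
      · simp only [etaTriple]; ring
      · simp only [etaTriple]
        nlinarith [mul_nonneg (by linarith : (0:ℝ) ≤ (M:ℝ) - 2*k)
          (by linarith : (0:ℝ) ≤ p_d - p_c)]
    refine ⟨hf1, ?_⟩
    rintro a ⟨ha0, ha1⟩
    rw [hf1]
    refine le_trans (min_le_left _ _) ?_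
    simp only [etaTriple]
    nlinarith [mul_nonneg (by linarith : (0:ℝ) ≤ 1 - a)
      (by linarith : (0:ℝ) ≤ (k:ℝ)*(p_d - p_c) - ((M:ℝ) - 2*k)*p_cd)]
  · -- Case (ii): slope of g is negative, max at crossing point a₀
    intro hc
    have hDen : 0 < etaTriple p_d p_c p_cd (2*(M:ℝ) - N) (-(2*(k:ℝ))) (2*(k:ℝ)) := by
      simp only [etaTriple]
      nlinarith [mul_pos (by linarith : (0:ℝ) < (k:ℝ)) hpcd]
    have hNum0 : 0 ≤ etaTriple p_d p_c p_cd (2*(M:ℝ) - N) (-(M:ℝ)) (M:ℝ) := by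
      simp only [etaTriple]
      nlinarith [mul_nonneg (mul_nonneg h0 (by linarith : (0:ℝ) ≤ 3*(k:ℝ) - M))
          (by linarith : (0:ℝ) ≤ (M:ℝ) - k),
        mul_le_mul_of_nonneg_left hc.le (by positivity : (0:ℝ) ≤ (M:ℝ)),
        (by linarith : (0:ℝ) < (k:ℝ))]
    have hNumLeDen : etaTriple p_d p_c p_cd (2*(M:ℝ) - N) (-(M:ℝ)) (M:ℝ) ≤
        etaTriple p_d p_c p_cd (2*(M:ℝ) - N) (-(2*(k:ℝ))) (2*(k:ℝ)) := by
      simp only [etaTriple]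
      nlinarith [mul_nonneg (by linarith : (0:ℝ) ≤ (M:ℝ) - 2*k)
        (by linarith : (0:ℝ) ≤ p_d - p_c)]
    set a₀ : ℝ := etaTriple p_d p_c p_cd (2*(M:ℝ) - N) (-(M:ℝ)) (M:ℝ) /
        etaTriple p_d p_c p_cd (2*(M:ℝ) - N) (-(2*(k:ℝ))) (2*(k:ℝ)) with ha0def
    have hmem : a₀ ∈ Set.Icc (0:ℝ) 1 := by
      rw [ha0def, Set.mem_Icc]
      exact ⟨div_nonneg hNum0 hDen.le, (div_le_one hDen).2 hNumLeDen⟩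
    clear_value a₀
    -- at a₀ the two branches cross
    have hcross : 2 * (etaTriple p_d p_c p_cd (M:ℝ) 0 (M:ℝ) -
          a₀ * etaTriple p_d p_c p_cd ((M:ℝ) - 2*k) (-(k:ℝ)) (k:ℝ)) =
        etaTriple p_d p_c p_cd (N:ℝ) (M:ℝ) (M:ℝ) + a₀ * (k:ℝ) * p_cd := by
      have hmul : a₀ * etaTriple p_d p_c p_cd (2*(M:ℝ) - N) (-(2*(k:ℝ))) (2*(k:ℝ)) =
          etaTriple p_d p_c p_cd (2*(M:ℝ) - N) (-(M:ℝ)) (M:ℝ) := by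
        rw [ha0def]
        exact div_mul_cancel₀ _ (ne_of_gt hDen)
      simp only [etaTriple] at hmul ⊢
      rw [hNR] at hmul ⊢
      linear_combination -hmul
    have hfa0 : min (2 * (etaTriple p_d p_c p_cd (M:ℝ) 0 (M:ℝ) -
          a₀ * etaTriple p_d p_c p_cd ((M:ℝ) - 2*k) (-(k:ℝ)) (k:ℝ)))
          (etaTriple p_d p_c p_cd (N:ℝ) (M:ℝ) (M:ℝ) + a₀ * (k:ℝ) * p_cd) =
        etaTriple p_d p_c p_cd (N:ℝ) (M:ℝ) (M:ℝ) + a₀ * (k:ℝ) * p_cd :=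
      min_eq_right (le_of_eq hcross.symm)
    refine ⟨hmem, ?_, ?_⟩
    · rw [hfa0, ha0def]
      ring
    · rintro a ⟨ha0', ha1'⟩
      rw [hfa0]
      rcases le_total a a₀ with hle | hle
      · refine le_trans (min_le_right _ _) ?_
        have h5 : 0 ≤ (a₀ - a) * ((k:ℝ) * p_cd) :=
          mul_nonneg (by linarith) (mul_nonneg (by linarith) h0)
        linarith [sub_mul a₀ a ((k:ℝ) * p_cd)]
      · refine le_trans (min_le_left _ _) ?_
        have hE : 0 < etaTriple p_d p_c p_cd ((M:ℝ) - 2*k) (-(k:ℝ)) (k:ℝ) := by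
          simp only [etaTriple]; linarith
        have h5 : 0 ≤ (a - a₀) * etaTriple p_d p_c p_cd ((M:ℝ) - 2*k) (-(k:ℝ)) (k:ℝ) :=
          mul_nonneg (by linarith) hE.le
        linarith [sub_mul a a₀ (etaTriple p_d p_c p_cd ((M:ℝ) - 2*k) (-(k:ℝ)) (k:ℝ)), hcross]
end

section
/- Let p_d, p_c, p_cd be reals with 0 ≤ p_cd ≤ p_c ≤ p_d ≤ 1, p_c + p_d − p_cd ≤ 1, and p_cd > p_d − p_c (Regime 2). Let M, N be positive integers with M ≤ N and 3M > 2N, and suppose N = 3k + 1 for an integer k (the case q = 1). Define f(a) := min( ⟨2M, 0, 2M⟩ − a·⟨2M−4k−1, −(2k+1), 2k+1⟩, ⟨N, M, M⟩ + a·k·p_cd ) for a ∈ [0,1]. Then: (i) if (2M−4k−1)·p_cd ≤ (2k+1)·(p_d − p_c), the maximum of f over [0,1] equals ⟨4k+1, 2k+1, 2M−2k−1⟩, attained at a = 1; (ii) if (2M−4k−1)·p_cd > (2k+1)·(p_d − p_c), the maximum of f over [0,1] equals ⟨N, M, M⟩ + k·p_cd·⟨2M−N, −M, M⟩/⟨2M−N,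 −(2k+1), 2k+1⟩, attained at a = ⟨2M−N, −M, M⟩/⟨2M−N, −(2k+1), 2k+1⟩. (This is the q = 1 case of Proposition 3, establishing the lower bound η_lb,1 of Theorem 3.) -/
/-!
The achievable DoF `f a = min (A - a B) (C + a k p_cd)` is the lower envelope of two lines whose
second one never decreases. If the first one does not decrease either (`B ≤ 0`, case (i)), `f` is
monotone and its maximum on `[0, 1]` sits at `a = 1`. Otherwise (`B > 0`, case (ii)) the maximum of
the envelope is at the crossing point `a₀ = (A - C) / (B + k p_cd)`, and with `N = 3k + 1` the
numerator and denominator of `a₀` are the two η-triples of the statement; the crossing lies in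
`[0, 1]` because `2k + 1 ≤ M ≤ N`.
-/

section LowerEnvelope

variable {u v s t : ℝ}

theorem monotone_min_sub_mul_add_mul (hs : s ≤ 0) (ht : 0 ≤ t) :
    Monotone fun a : ℝ => min (u - a * s) (v + a * t) := fun _ _ hab =>
  min_le_min (by linarith [mul_le_mul_of_nonpos_right hab hs])
    (by linarith [mul_le_mul_of_nonneg_right hab ht])

theorem min_sub_mul_add_mul_le_of_eq {a₀ : ℝ} (hs : 0 ≤ s) (ht : 0 ≤ t)
    (h : u - a₀ * s = v + a₀ * t) (a : ℝ) : min (u - a * s) (v + a * t) ≤ v + a₀ * t := by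
  rcases le_total a a₀ with ha | ha
  · exact (min_le_right _ _).trans (by linarith [mul_le_mul_of_nonneg_right ha ht])
  · exact (min_le_left _ _).trans (by linarith [mul_le_mul_of_nonneg_right ha hs])

theorem sub_div_mul_eq_add_div_mul (h : s + t ≠ 0) :
    u - (u - v) / (s + t) * s = v + (u - v) / (s + t) * t := by
  field_simp
  ring

end LowerEnvelope

section EtaTriple

variable {p_d p_c p_cd : ℝ}

theorem etaTriple_neg_self (a b : ℝ) :
    etaTriple p_d p_c p_cd a (-b) b = a * p_cd - b * (p_d - p_c) := by
  unfold etaTriple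
  ring

theorem etaTriple_neg_self_anti (h : p_c ≤ p_d) {a b b' : ℝ} (hb : b ≤ b') :
    etaTriple p_d p_c p_cd a (-b') b' ≤ etaTriple p_d p_c p_cd a (-b) b := by
  rw [etaTriple_neg_self, etaTriple_neg_self]
  linarith [mul_le_mul_of_nonneg_right hb (sub_nonneg.2 h)]

theorem etaTriple_crossing_num_nonneg {M N k : ℕ} (h0 : 0 ≤ p_cd) (hMk : 2 * k + 1 ≤ M)
    (hMN : M ≤ N) (hN : N = 3 * k + 1)
    (hB : 0 < (2 * (M : ℝ) - 4 * k - 1) * p_cd - (2 * (k : ℝ) + 1) * (p_d - p_c)) :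
    0 ≤ etaTriple p_d p_c p_cd (2 * (M : ℝ) - N) (-(M : ℝ)) M := by
  have hMk' : 2 * (k : ℝ) + 1 ≤ M := by exact_mod_cast hMk
  have hMN' : (M : ℝ) ≤ N := by exact_mod_cast hMN
  have hN' : (N : ℝ) = 3 * k + 1 := by exact_mod_cast hN
  have key : (2 * (k : ℝ) + 1) * etaTriple p_d p_c p_cd (2 * (M : ℝ) - N) (-(M : ℝ)) M =
      M * ((2 * (M : ℝ) - 4 * k - 1) * p_cd - (2 * (k : ℝ) + 1) * (p_d - p_c)) +
        p_cd * ((2 * (M : ℝ) - 2 * k - 1) * (N - M)) := by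
    rw [etaTriple_neg_self, hN']
    ring
  refine nonneg_of_mul_nonneg_right ?_ (by positivity : (0 : ℝ) < 2 * k + 1)
  rw [key]
  exact add_nonneg (mul_nonneg (Nat.cast_nonneg M) hB.le)
    (mul_nonneg h0 (mul_nonneg (by linarith) (by linarith)))

end EtaTriple

theorem hkia_typeI_q1_optimum_general (p_d p_c p_cd : ℝ) (M N k : ℕ)
    (h0 : 0 ≤ p_cd) (h2 : p_c ≤ p_d)
    (hMN : M ≤ N) (h23 : 2*N < 3*M)
    (hk : N = 3*k + 1) :
    letI f : ℝ → ℝ := fun a =>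
      min (etaTriple p_d p_c p_cd (2*(M:ℝ)) 0 (2*(M:ℝ)) -
            a * etaTriple p_d p_c p_cd (2*(M:ℝ) - 4*k - 1) (-(2*(k:ℝ) + 1)) (2*(k:ℝ) + 1))
          (etaTriple p_d p_c p_cd (N:ℝ) (M:ℝ) (M:ℝ) + a * (k:ℝ) * p_cd)
    ((2*(M:ℝ) - 4*k - 1) * p_cd ≤ (2*(k:ℝ) + 1) * (p_d - p_c) →
      f 1 = etaTriple p_d p_c p_cd (4*(k:ℝ) + 1) (2*(k:ℝ) + 1) (2*(M:ℝ) - 2*k - 1) ∧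
      ∀ a ∈ Set.Icc (0:ℝ) 1, f a ≤ f 1) ∧
    ((2*(k:ℝ) + 1) * (p_d - p_c) < (2*(M:ℝ) - 4*k - 1) * p_cd →
      letI a₀ : ℝ := etaTriple p_d p_c p_cd (2*(M:ℝ) - N) (-(M:ℝ)) (M:ℝ) /
        etaTriple p_d p_c p_cd (2*(M:ℝ) - N) (-(2*(k:ℝ) + 1)) (2*(k:ℝ) + 1)
      a₀ ∈ Set.Icc (0:ℝ) 1 ∧
      f a₀ = etaTriple p_d p_c p_cd (N:ℝ) (M:ℝ) (M:ℝ) +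
        (k:ℝ) * p_cd * etaTriple p_d p_c p_cd (2*(M:ℝ) - N) (-(M:ℝ)) (M:ℝ) /
          etaTriple p_d p_c p_cd (2*(M:ℝ) - N) (-(2*(k:ℝ) + 1)) (2*(k:ℝ) + 1) ∧
      ∀ a ∈ Set.Icc (0:ℝ) 1, f a ≤ f a₀) := by
  beta_reduce
  simp only [mul_assoc]
  set A := etaTriple p_d p_c p_cd (2*(M:ℝ)) 0 (2*(M:ℝ))
  set B := etaTriple p_d p_c p_cd (2*(M:ℝ) - 4*k - 1) (-(2*(k:ℝ) + 1)) (2*(k:ℝ) + 1) with hBeq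
  set C := etaTriple p_d p_c p_cd (N:ℝ) (M:ℝ) (M:ℝ)
  set Num := etaTriple p_d p_c p_cd (2*(M:ℝ) - N) (-(M:ℝ)) (M:ℝ)
  set Den := etaTriple p_d p_c p_cd (2*(M:ℝ) - N) (-(2*(k:ℝ) + 1)) (2*(k:ℝ) + 1)
  have hMk : 2 * k + 1 ≤ M := by omega
  have hN : (N : ℝ) = 3 * k + 1 := by exact_mod_cast hk
  have hkp : 0 ≤ (k : ℝ) * p_cd := by positivity
  rw [etaTriple_neg_self] at hBeq
  have hNum : Num = A - C := by simp only [Num, A, C, etaTriple, hN]; ring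
  have hDen : Den = B + k * p_cd := by simp only [Den, etaTriple_neg_self, hBeq, hN]; ring
  have hNumDen : Num ≤ Den := etaTriple_neg_self_anti h2 (by exact_mod_cast hMk)
  refine ⟨fun hBneg => ?_, fun hBpos => ?_⟩
  · have hB : B ≤ 0 := by rw [hBeq]; linarith
    refine ⟨?_, fun a ha => monotone_min_sub_mul_add_mul hB hkp ha.2⟩
    rw [min_eq_left (by linarith), one_mul]
    simp only [A, B, etaTriple]
    ring
  · have hB : 0 < B := by rw [hBeq]; linarith
    have hDenpos : 0 < Den := by linarith
    have hcross :=
      sub_div_mul_eq_add_div_mul (u := A) (v := C) (s := B) (t := k * p_cd) (hDen ▸ hDenpos.ne')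
    rw [← hDen, ← hNum] at hcross
    refine ⟨⟨div_nonneg ?_ hDenpos.le, (div_le_one hDenpos).2 hNumDen⟩, ?_, fun a _ => ?_⟩
    · exact etaTriple_crossing_num_nonneg h0 hMk hMN hk (sub_pos.2 hBpos)
    · rw [hcross, min_self]
      ring
    · rw [hcross, min_self]
      exact min_sub_mul_add_mul_le_of_eq hB.le hkp hcross a

/-- Proposition 3 (case q = 1): optimal power tuning and achievable sum DoF of
the HKIA scheme on the Type I bursty MIMO X channel in Regime 2, N = 3k + 1. -/
theorem hkia_typeI_q1_optimum (p_d p_c p_cd : ℝ) (M N k : ℕ)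
    (h0 : 0 ≤ p_cd) (h1 : p_cd ≤ p_c) (h2 : p_c ≤ p_d) (h3 : p_d ≤ 1)
    (h4 : p_c + p_d - p_cd ≤ 1) (hreg2 : p_d - p_c < p_cd)
    (hM : 0 < M) (hN : 0 < N) (hMN : M ≤ N) (h23 : 2*N < 3*M)
    (hk : N = 3*k + 1) :
    letI f : ℝ → ℝ := fun a =>
      min (etaTriple p_d p_c p_cd (2*(M:ℝ)) 0 (2*(M:ℝ)) -
            a * etaTriple p_d p_c p_cd (2*(M:ℝ) - 4*k - 1) (-(2*(k:ℝ) + 1)) (2*(k:ℝ) + 1))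
          (etaTriple p_d p_c p_cd (N:ℝ) (M:ℝ) (M:ℝ) + a * (k:ℝ) * p_cd)
    ((2*(M:ℝ) - 4*k - 1) * p_cd ≤ (2*(k:ℝ) + 1) * (p_d - p_c) →
      f 1 = etaTriple p_d p_c p_cd (4*(k:ℝ) + 1) (2*(k:ℝ) + 1) (2*(M:ℝ) - 2*k - 1) ∧
      ∀ a ∈ Set.Icc (0:ℝ) 1, f a ≤ f 1) ∧
    ((2*(k:ℝ) + 1) * (p_d - p_c) < (2*(M:ℝ) - 4*k - 1) * p_cd →
      letI a₀ : ℝ := etaTriple p_d p_c p_cd (2*(M:ℝ) - N) (-(M:ℝ)) (M:ℝ) /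
        etaTriple p_d p_c p_cd (2*(M:ℝ) - N) (-(2*(k:ℝ) + 1)) (2*(k:ℝ) + 1)
      a₀ ∈ Set.Icc (0:ℝ) 1 ∧
      f a₀ = etaTriple p_d p_c p_cd (N:ℝ) (M:ℝ) (M:ℝ) +
        (k:ℝ) * p_cd * etaTriple p_d p_c p_cd (2*(M:ℝ) - N) (-(M:ℝ)) (M:ℝ) /
          etaTriple p_d p_c p_cd (2*(M:ℝ) - N) (-(2*(k:ℝ) + 1)) (2*(k:ℝ) + 1) ∧
      ∀ a ∈ Set.Icc (0:ℝ) 1, f a ≤ f a₀) :=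
  hkia_typeI_q1_optimum_general p_d p_c p_cd M N k h0 h2 hMN h23 hk
end

section
/- Let p_d, p_c, p_cd be reals with 0 ≤ p_cd ≤ p_c ≤ p_d ≤ 1, p_c + p_d − p_cd ≤ 1, and p_cd > p_d − p_c (Regime 2). Let M, N be positive integers with M ≤ N and 3M > 2N, and suppose N = 3k + 2 for an integer k (the case q = 2). Define f(a) := min( 2·(⟨M, 0, M⟩ − a·⟨M−2k−1, −(k+1), k+1⟩), ⟨N, M, M⟩ + a·⟨k, 1, −1⟩ ) for a ∈ [0,1]. Then: (i) if (M−2k−1)·p_cd ≤ (k+1)·(p_d − p_c), the maximum of f over [0,1] equals ⟨4k+2, 2k+2, 2M−2k−2⟩, attained at a = 1; (ii) if (M−2k−1)·p_cd > (k+1)·(p_d − p_c), the maximum of f over [0,1] equals ⟨N, M, M⟩ + ⟨k, 1, −1⟩·⟨2M−N, −M, M⟩/⟨2M−N, −(2k+1), 2k+1⟩, attained at a = ⟨2M−N, −M, M⟩/⟨2M−N, −(2k+1), 2k+1⟩. (This is the q = 2 case of Proposition 3, establishing the lower bound η_lb,1 of Theorem 3.) -/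
/-- Proposition 3 (case q = 2): optimal power tuning and achievable sum DoF of
the HKIA scheme on the Type I bursty MIMO X channel in Regime 2, N = 3k + 2. -/
theorem hkia_typeI_q2_optimum (p_d p_c p_cd : ℝ) (M N k : ℕ)
    (h0 : 0 ≤ p_cd) (h1 : p_cd ≤ p_c) (h2 : p_c ≤ p_d) (h3 : p_d ≤ 1)
    (h4 : p_c + p_d - p_cd ≤ 1) (hreg2 : p_d - p_c < p_cd)
    (hM : 0 < M) (hN : 0 < N) (hMN : M ≤ N) (h23 : 2*N < 3*M)
    (hk : N = 3*k + 2) :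
    letI f : ℝ → ℝ := fun a =>
      min (2 * (etaTriple p_d p_c p_cd (M:ℝ) 0 (M:ℝ) -
            a * etaTriple p_d p_c p_cd ((M:ℝ) - 2*k - 1) (-((k:ℝ) + 1)) ((k:ℝ) + 1)))
          (etaTriple p_d p_c p_cd (N:ℝ) (M:ℝ) (M:ℝ) +
            a * etaTriple p_d p_c p_cd (k:ℝ) 1 (-1))
    (((M:ℝ) - 2*k - 1) * p_cd ≤ ((k:ℝ) + 1) * (p_d - p_c) →
      f 1 = etaTriple p_d p_c p_cd (4*(k:ℝ) + 2) (2*(k:ℝ) + 2) (2*(M:ℝ) - 2*k - 2) ∧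
      ∀ a ∈ Set.Icc (0:ℝ) 1, f a ≤ f 1) ∧
    (((k:ℝ) + 1) * (p_d - p_c) < ((M:ℝ) - 2*k - 1) * p_cd →
      letI a₀ : ℝ := etaTriple p_d p_c p_cd (2*(M:ℝ) - N) (-(M:ℝ)) (M:ℝ) /
        etaTriple p_d p_c p_cd (2*(M:ℝ) - N) (-(2*(k:ℝ) + 1)) (2*(k:ℝ) + 1)
      a₀ ∈ Set.Icc (0:ℝ) 1 ∧
      f a₀ = etaTriple p_d p_c p_cd (N:ℝ) (M:ℝ) (M:ℝ) +
        etaTriple p_d p_c p_cd (k:ℝ) 1 (-1) *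
          etaTriple p_d p_c p_cd (2*(M:ℝ) - N) (-(M:ℝ)) (M:ℝ) /
          etaTriple p_d p_c p_cd (2*(M:ℝ) - N) (-(2*(k:ℝ) + 1)) (2*(k:ℝ) + 1) ∧
      ∀ a ∈ Set.Icc (0:ℝ) 1, f a ≤ f a₀) := by
  have hM2k : 2*k + 2 ≤ M := by omega
  have hMc : (2*(k:ℝ)+2) ≤ (M:ℝ) := by exact_mod_cast hM2k
  have hNc : (N:ℝ) = 3*(k:ℝ)+2 := by rw [hk]; push_cast; ring
  have hMN3 : (M:ℝ) ≤ 3*(k:ℝ)+2 := by rw [← hNc]; exact_mod_cast hMN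
  have hk0 : (0:ℝ) ≤ (k:ℝ) := Nat.cast_nonneg k
  have hdc : (0:ℝ) ≤ p_d - p_c := by linarith
  set A := etaTriple p_d p_c p_cd (M:ℝ) 0 (M:ℝ) with hA
  set B := etaTriple p_d p_c p_cd ((M:ℝ) - 2*k - 1) (-((k:ℝ) + 1)) ((k:ℝ) + 1) with hBd
  set C := etaTriple p_d p_c p_cd (N:ℝ) (M:ℝ) (M:ℝ) with hC
  set D := etaTriple p_d p_c p_cd (k:ℝ) 1 (-1) with hDd
  set P := etaTriple p_d p_c p_cd (2*(M:ℝ) - N) (-(M:ℝ)) (M:ℝ) with hPd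
  set Q := etaTriple p_d p_c p_cd (2*(M:ℝ) - N) (-(2*(k:ℝ) + 1)) (2*(k:ℝ) + 1) with hQd
  have hBval : B = ((M:ℝ)-2*k-1)*p_cd - ((k:ℝ)+1)*(p_d-p_c) := by
    simp only [hBd, etaTriple]; ring
  have hDval : D = (k:ℝ)*p_cd + (p_d - p_c) := by
    simp only [hDd, etaTriple]; ring
  have hD0 : 0 ≤ D := by
    have := mul_nonneg hk0 h0; rw [hDval]; linarith
  have h2AC : 2*A - C = P := by
    simp only [hA, hC, hPd, etaTriple]; ring
  have hQBD : 2*B + D = Q := by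
    simp only [hQd, hBd, hDd, etaTriple, hNc]; ring
  constructor
  · intro hcond
    have hBle : B ≤ 0 := by rw [hBval]; linarith
    constructor
    · show min (2*(A - 1*B)) (C + 1*D) = _
      rw [min_eq_left]
      · simp only [hA, hBd, etaTriple]; ring
      · have t := mul_nonneg (by linarith : (0:ℝ) ≤ (M:ℝ)-2*(k:ℝ)-1) hdc
        simp only [hA, hBd, hC, hDd, etaTriple, hNc] at *
        linarith [t]
    · intro a ha
      obtain ⟨ha0, ha1⟩ := ha
      show min (2*(A - a*B)) (C + a*D) ≤ min (2*(A - 1*B)) (C + 1*D)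
      apply min_le_min
      · have t := mul_nonneg (by linarith : (0:ℝ) ≤ 1-a) (by linarith : (0:ℝ) ≤ -B)
        linarith [t]
      · have t := mul_nonneg (by linarith : (0:ℝ) ≤ 1-a) hD0
        linarith [t]
  · intro hcond
    have hBpos : 0 < B := by rw [hBval]; linarith
    have hQpos : 0 < Q := by rw [← hQBD]; linarith
    have hPnn : 0 ≤ P := by
      have t1 := mul_nonneg hk0 (by linarith : (0:ℝ) ≤ p_cd - (p_d - p_c))
      have t2 := mul_nonneg (by linarith : (0:ℝ) ≤ 3*(k:ℝ)+2-(M:ℝ)) hdc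
      have hBv2 : 0 < ((M:ℝ)-2*k-1)*p_cd - ((k:ℝ)+1)*(p_d-p_c) := by
        rw [← hBval]; exact hBpos
      simp only [hPd, etaTriple, hNc]
      linarith [t1, t2, hBv2]
    have hPQle : P ≤ Q := by
      have t3 := mul_nonneg (by linarith : (0:ℝ) ≤ (M:ℝ)-2*(k:ℝ)-1) hdc
      simp only [hPd, hQd, etaTriple]
      linarith [t3]
    have hEq : 2*(A - (P/Q)*B) = C + (P/Q)*D := by
      have hc : P / Q * Q = P := div_mul_cancel₀ P (ne_of_gt hQpos)
      linear_combination h2AC - hc - (P/Q) * hQBD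
    refine ⟨⟨div_nonneg hPnn hQpos.le, (div_le_one hQpos).mpr hPQle⟩, ?_, ?_⟩
    · show min (2*(A - (P/Q)*B)) (C + (P/Q)*D) = C + D * P / Q
      rw [hEq, min_self]; ring
    · intro a ha
      show min (2*(A - a*B)) (C + a*D) ≤ min (2*(A - (P/Q)*B)) (C + (P/Q)*D)
      rw [hEq, min_self]
      rcases le_total a (P/Q) with hle | hle
      · refine le_trans (min_le_right _ _) ?_
        have := mul_le_mul_of_nonneg_right hle hD0
        linarith
      · refine le_trans (min_le_left _ _) ?_
        rw [← hEq]
        have := mul_le_mul_of_nonneg_right hle hBpos.le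
        linarith
end
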